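/- Let α be a graphic degree sequence of length n and let i ≠ j be indices such that the edge {i,j} is forced for α. Then for every realization G of α, the set of vertices V − (N(i) ∪ N(j)) lying outside both the neighborhood of vertex i and the neighborhood of vertex j forms an independent set in G (no two of these vertices are adjacent). -/

import Mathlib

/-!
Let `u, v` lie outside `N(i) ∪ N(j)`. If `u` and `v` were adjacent, the 2-switch replacing the
edges `ij`, `uv` by `iu`, `jv` would give another realization of `α` (every vertex loses one
neighbour and gains one), and it does not contain the forced edge `ij`.
-/

/-- `G` is a (labeled) realization of the degree sequence `α` if the degree of
vertex `v` in `G` equals `α v` for every `v`. -/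
def IsRealization {n : ℕ} (α : Fin n → ℕ) (G : SimpleGraph (Fin n)) : Prop :=
  ∀ v : Fin n, (G.neighborSet v).ncard = α v

/-- A sequence is graphic if it has a realization. -/
def Graphic {n : ℕ} (α : Fin n → ℕ) : Prop :=
  ∃ G : SimpleGraph (Fin n), IsRealization α G

/-- The edge `{i,j}` is forced for `α` if it lies in every realization of `α`. -/
def ForcedEdge {n : ℕ} (α : Fin n → ℕ) (i j : Fin n) : Prop :=
  ∀ G : SimpleGraph (Fin n), IsRealization α G → G.Adj i j

/-- The edge `{i,j}` is forbidden for `α` if it lies in no realization of `α`. -/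
def ForbiddenEdge {n : ℕ} (α : Fin n → ℕ) (i j : Fin n) : Prop :=
  ∀ G : SimpleGraph (Fin n), IsRealization α G → ¬ G.Adj i j

/-- `α` majorizes `β`: every partial sum of `α` is at least the corresponding
partial sum of `β`, and the total sums agree. -/
def Majorizes {n : ℕ} (α β : Fin n → ℕ) : Prop :=
  (∀ k : ℕ, k ≤ n →
    ∑ i ∈ Finset.univ.filter (fun i : Fin n => (i : ℕ) < k), β i ≤
    ∑ i ∈ Finset.univ.filter (fun i : Fin n => (i : ℕ) < k), α i) ∧
  ∑ i, α i = ∑ i, β i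

namespace SimpleGraph

variable {V : Type*} (G : SimpleGraph V) {a b c d : V}

def twoSwitch (a b c d : V) : SimpleGraph V :=
  G.deleteEdges {s(a, b), s(c, d)} ⊔ edge a c ⊔ edge b d

lemma twoSwitch_swap_ends : G.twoSwitch a b c d = G.twoSwitch b a d c := by
  ext x y
  simp only [twoSwitch, sup_adj, deleteEdges_adj, edge_adj, Set.mem_insert_iff,
    Set.mem_singleton_iff, Sym2.eq_swap (a := b), Sym2.eq_swap (a := d)]
  tauto

lemma twoSwitch_swap_edges : G.twoSwitch a b c d = G.twoSwitch c d a b := by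
  ext x y
  simp only [twoSwitch, sup_adj, deleteEdges_adj, edge_adj, Set.mem_insert_iff,
    Set.mem_singleton_iff]
  tauto

lemma neighborSet_twoSwitch_left (hab : G.Adj a b) (hac : a ≠ c) (had : a ≠ d) :
    (G.twoSwitch a b c d).neighborSet a = insert c (G.neighborSet a \ {b}) := by
  ext x
  simp only [twoSwitch, mem_neighborSet, sup_adj, deleteEdges_adj, edge_adj,
    Set.mem_insert_iff, Set.mem_sdiff, Set.mem_singleton_iff, Sym2.eq_iff]
  have := hab.ne
  aesop

lemma neighborSet_twoSwitch_of_ne {w : V} (ha : w ≠ a) (hb : w ≠ b) (hc : w ≠ c)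
    (hd : w ≠ d) :
    (G.twoSwitch a b c d).neighborSet w = G.neighborSet w := by
  ext x
  simp only [twoSwitch, mem_neighborSet, sup_adj, deleteEdges_adj, edge_adj,
    Set.mem_insert_iff, Set.mem_singleton_iff, Sym2.eq_iff]
  aesop

theorem ncard_neighborSet_twoSwitch (hab : G.Adj a b) (hcd : G.Adj c d)
    (hac : ¬G.Adj a c) (hbd : ¬G.Adj b d) (hac_ne : a ≠ c) (hbd_ne : b ≠ d) (w : V) :
    ((G.twoSwitch a b c d).neighborSet w).ncard = (G.neighborSet w).ncard := by
  have had : a ≠ d := (G.ne_of_adj_of_not_adj hcd.symm hac).symm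
  have hbc : b ≠ c := (G.ne_of_adj_of_not_adj hcd hbd).symm
  by_cases hwa : w = a
  · subst hwa
    rw [G.neighborSet_twoSwitch_left hab hac_ne had,
      Set.ncard_exchange (s := G.neighborSet _) hac hab]
  by_cases hwb : w = b
  · subst hwb
    rw [twoSwitch_swap_ends, G.neighborSet_twoSwitch_left hab.symm hbd_ne hbc,
      Set.ncard_exchange (s := G.neighborSet _) hbd hab.symm]
  by_cases hwc : w = c
  · subst hwc
    rw [twoSwitch_swap_edges, G.neighborSet_twoSwitch_left hcd hac_ne.symm hbc.symm,
      Set.ncard_exchange (s := G.neighborSet _) (fun h => hac h.symm) hcd]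
  by_cases hwd : w = d
  · subst hwd
    rw [twoSwitch_swap_edges, twoSwitch_swap_ends,
      G.neighborSet_twoSwitch_left hcd.symm hbd_ne.symm had.symm,
      Set.ncard_exchange (s := G.neighborSet _) (fun h => hbd h.symm) hcd.symm]
  rw [G.neighborSet_twoSwitch_of_ne hwa hwb hwc hwd]

lemma not_adj_twoSwitch (had : a ≠ d) (hbc : b ≠ c) : ¬(G.twoSwitch a b c d).Adj a b := by
  simp only [twoSwitch, sup_adj, deleteEdges_adj, edge_adj, Set.mem_insert_iff,
    Set.mem_singleton_iff]
  tauto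

end SimpleGraph

theorem IsRealization.twoSwitch {n : ℕ} {α : Fin n → ℕ} {G : SimpleGraph (Fin n)}
    (hG : IsRealization α G) {a b c d : Fin n} (hab : G.Adj a b) (hcd : G.Adj c d)
    (hac : ¬G.Adj a c) (hbd : ¬G.Adj b d) (hac_ne : a ≠ c) (hbd_ne : b ≠ d) :
    IsRealization α (G.twoSwitch a b c d) := fun w =>
  (G.ncard_neighborSet_twoSwitch hab hcd hac hbd hac_ne hbd_ne w).trans (hG w)

theorem forced_edge_gives_independent_set_general {n : ℕ} (α : Fin n → ℕ)
    (i j : Fin n) (hf : ForcedEdge α i j)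
    (G : SimpleGraph (Fin n)) (hG : IsRealization α G) :
    ∀ u v : Fin n,
      u ∉ G.neighborSet i ∪ G.neighborSet j →
      v ∉ G.neighborSet i ∪ G.neighborSet j →
      ¬ G.Adj u v := by
  intro u v hu hv huv
  simp only [Set.mem_union, SimpleGraph.mem_neighborSet, not_or] at hu hv
  obtain ⟨hiu, hju⟩ := hu
  obtain ⟨hiv, hjv⟩ := hv
  have hij : G.Adj i j := hf G hG
  have hG' := hG.twoSwitch hij huv hiu hjv
    (G.ne_of_adj_of_not_adj hij fun h => hju h.symm)
    (G.ne_of_adj_of_not_adj hij.symm fun h => hiv h.symm)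
  exact G.not_adj_twoSwitch (G.ne_of_adj_of_not_adj hij fun h => hjv h.symm)
    (G.ne_of_adj_of_not_adj hij.symm fun h => hiu h.symm) (hf _ hG')

/-- if the edge `{i,j}` is forced for the graphic nonincreasing
degree sequence `α`, then in every realization `G` of `α` the vertices lying
outside `N(i) ∪ N(j)` form an independent set. -/
theorem forced_edge_gives_independent_set {n : ℕ} (α : Fin n → ℕ)
    (hα : Antitone α) (hb : ∀ v, α v ≤ n - 1) (hg : Graphic α)
    (i j : Fin n) (hij : i ≠ j) (hf : ForcedEdge α i j)
    (G : SimpleGraph (Fin n)) (hG : IsRealization α G) :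
    ∀ u v : Fin n,
      u ∉ G.neighborSet i ∪ G.neighborSet j →
      v ∉ G.neighborSet i ∪ G.neighborSet j →
      ¬ G.Adj u v :=
  forced_edge_gives_independent_set_general α i j hf G hG
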